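/- arXiv:cs/0601116 — 7 statements merged into one kernel-verified Lean document; each statement's English description precedes it below -/
import Mathlib

section
/- Let π be a subset seed of span m over a finite alphabet A with distinguished letter 1. Then the automaton S_π accepts exactly the words in which π occurs: for every word s ∈ A*, ψ*((∅,0), s) is a final state if and only if there exists p with 0 ≤ p ≤ |s| − m such that s_{p+i} ∈ π_i for all i ∈ [1..m]. -/
/-- The set `R_π` of non-`#` positions of a subset seed `π` of span `m` over an alphabet
with distinguished "match" letter `one`: positions `i ∈ [1..m]` with `π i ≠ {one}`. -/
def Rpi {A : Type*} [DecidableEq A] (m : ℕ) (one : A) (π : ℕ → Finset A) : Finset ℕ :=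
  (Finset.Icc 1 m).filter (fun i => π i ≠ {one})

/-- Transition function `ψ` of the subset seed automaton `S_π`.  States are pairs
`(X, t)` with `X : Finset ℕ` and `t : ℕ`; note that `max (X ∪ {0}) = X.sup id`.
A state is final when `max (X ∪ {0}) + t ≥ m`; final states are fixed.  On a
non-final state `(X, t)`: reading `one` yields `(X, t+1)`; reading `a ≠ one`
yields `(X_U ∪ X_V, 0)` with `X_U = {x ∈ R_π : x ≤ t+1 ∧ a ∈ π x}` and
`X_V = {x+t+1 : x ∈ X, x+t+1 ≤ m, a ∈ π (x+t+1)}`. -/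
def seedStep {A : Type*} [DecidableEq A] (m : ℕ) (one : A) (π : ℕ → Finset A)
    (q : Finset ℕ × ℕ) (a : A) : Finset ℕ × ℕ :=
  if m ≤ q.1.sup id + q.2 then q
  else if a = one then (q.1, q.2 + 1)
  else ((Rpi m one π).filter (fun x => x ≤ q.2 + 1 ∧ a ∈ π x) ∪
        ((q.1.filter (fun x => x + q.2 + 1 ≤ m ∧ a ∈ π (x + q.2 + 1))).image
          (fun x => x + q.2 + 1)), 0)

/-- The extension `ψ*` of the transition function of `S_π` to words,
reading letters left to right from state `q`. -/
def seedRun {A : Type*} [DecidableEq A] (m : ℕ) (one : A) (π : ℕ → Finset A)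
    (q : Finset ℕ × ℕ) : List A → Finset ℕ × ℕ
  | [] => q
  | a :: s => seedRun m one π (seedStep m one π q a) s

/-!
After reading a word `w` in which `π` does not occur, the automaton is in the state `(X, t)` where
`t` is the number of trailing `1`s of `w` and `X` is the set of `x ∈ R_π` such that `π_1 … π_x`
matches a suffix of the part of `w` before those `1`s. Since `1 ∈ π_i` for all `i`, the prefixes
of `π` that match a suffix of `w` are then exactly those of length `≤ t` and those of length
`x + t` with `x ∈ X`. Hence the state is final exactly when `π` itself matches a suffix of `w`,
and one step of `ψ` turns this description of `w` into the description of `w a`.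
-/

theorem Finset.mem_iff_le_sup_id {X : Finset ℕ} {k : ℕ} (hk : 0 < k) (hX : X.sup id ≤ k) :
    k ∈ X ↔ k ≤ X.sup id := by
  refine ⟨fun h => Finset.le_sup (f := id) h, fun h => ?_⟩
  obtain ⟨y, hy, hsup⟩ := Finset.exists_mem_eq_sup X
    (Finset.nonempty_iff_ne_empty.2 fun hX0 => by simp [hX0] at h; omega) id
  rwa [show k = y by simp only [id] at hsup; omega]

namespace SubsetSeed

variable {A : Type*} {π : ℕ → Finset A}

def Matches (π : ℕ → Finset A) (v : List A) : Prop :=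
  ∀ i (h : i < v.length), v[i] ∈ π (i + 1)

def MatchesSuffix (π : ℕ → Finset A) (x : ℕ) (u : List A) : Prop :=
  ∃ v, v <:+ u ∧ v.length = x ∧ Matches π v

def Occurs (π : ℕ → Finset A) (m : ℕ) (s : List A) : Prop :=
  ∃ v, v <:+: s ∧ v.length = m ∧ Matches π v

theorem matches_concat {v : List A} {a : A} :
    Matches π (v ++ [a]) ↔ Matches π v ∧ a ∈ π (v.length + 1) := by
  constructor
  · intro h
    refine ⟨fun i hi => ?_, ?_⟩
    · rw [← List.getElem_append_left hi]
      exact h i (by simp; omega)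
    · simpa using h v.length (by simp)
  · rintro ⟨hv, ha⟩ i hi
    rw [List.getElem_append]
    split_ifs with hiv
    · exact hv i hiv
    · obtain rfl : i = v.length := by simp at hi; omega
      simpa using ha

theorem matchesSuffix_zero (u : List A) : MatchesSuffix π 0 u :=
  ⟨[], List.nil_suffix, rfl, fun _ h => absurd h (Nat.not_lt_zero _)⟩

theorem matchesSuffix_nil_iff {x : ℕ} : MatchesSuffix π x [] ↔ x = 0 := by
  simp [MatchesSuffix, Matches, eq_comm]

theorem matchesSuffix_concat_succ {x : ℕ} {u : List A} {a : A} :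
    MatchesSuffix π (x + 1) (u ++ [a]) ↔ MatchesSuffix π x u ∧ a ∈ π (x + 1) := by
  simp only [MatchesSuffix, List.suffix_concat_iff]
  constructor
  · rintro ⟨_, rfl | ⟨v, rfl, hv⟩, hlen, hmatch⟩
    · simp at hlen
    · simp only [List.length_append, List.length_singleton, Nat.add_right_cancel_iff] at hlen
      rw [matches_concat, hlen] at hmatch
      exact ⟨⟨v, hv, hlen, hmatch.1⟩, hmatch.2⟩
  · rintro ⟨⟨v, hv, rfl, hmatch⟩, ha⟩
    exact ⟨v ++ [a], Or.inr ⟨v, rfl, hv⟩, by simp, matches_concat.2 ⟨hmatch, ha⟩⟩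

theorem matchesSuffix_append_replicate {x t : ℕ} {u : List A} {b : A}
    (hb : ∀ i, x < i → i ≤ x + t → b ∈ π i) :
    MatchesSuffix π (x + t) (u ++ List.replicate t b) ↔ MatchesSuffix π x u := by
  induction t with
  | zero => simp
  | succ t ih =>
    rw [List.replicate_succ', ← List.append_assoc, ← Nat.add_assoc, matchesSuffix_concat_succ,
      ih fun i hi hit => hb i hi (by omega), and_iff_left (hb _ (by omega) (by omega))]

theorem exists_getLast?_mem_of_matchesSuffix {x : ℕ} {u : List A}
    (h : MatchesSuffix π x u) (hx : x ≠ 0) : ∃ b, u.getLast? = some b ∧ b ∈ π x := by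
  obtain ⟨x, rfl⟩ := Nat.exists_eq_succ_of_ne_zero hx
  rcases u.eq_nil_or_concat with rfl | ⟨u, b, rfl⟩
  · exact absurd (matchesSuffix_nil_iff.1 h) hx
  · rw [List.concat_eq_append] at h
    exact ⟨b, by simp, (matchesSuffix_concat_succ.1 h).2⟩

theorem occurs_nil_iff {m : ℕ} : Occurs π m [] ↔ MatchesSuffix π m [] := by
  simp [Occurs, MatchesSuffix]

theorem occurs_concat_iff {m : ℕ} {s : List A} {a : A} :
    Occurs π m (s ++ [a]) ↔ Occurs π m s ∨ MatchesSuffix π m (s ++ [a]) := by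
  simp only [Occurs, MatchesSuffix, List.infix_concat_iff, or_and_right, exists_or, or_comm]

theorem forall₂_mem_iff_matches {m : ℕ} {v : List A} :
    List.Forall₂ (fun (b : Finset A) (a : A) => a ∈ b)
      ((List.range m).map (fun i => π (i + 1))) v ↔ v.length = m ∧ Matches π v := by
  rw [List.forall₂_iff_get]
  simp only [List.length_map, List.length_range, List.get_eq_getElem, List.getElem_map,
    List.getElem_range, Matches]
  constructor
  · rintro ⟨hlen, h⟩
    exact ⟨hlen.symm, fun i hi => h i (by omega) hi⟩
  · rintro ⟨rfl, h⟩
    exact ⟨rfl, fun i _ hi => h i hi⟩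

theorem occurs_iff_exists_forall₂ {m : ℕ} {s : List A} :
    Occurs π m s ↔ ∃ p : ℕ, List.Forall₂ (fun (b : Finset A) (a : A) => a ∈ b)
        ((List.range m).map (fun i => π (i + 1))) ((s.drop p).take m) := by
  simp only [forall₂_mem_iff_matches, Occurs]
  constructor
  · rintro ⟨v, ⟨l₁, l₂, rfl⟩, rfl, hv⟩
    exact ⟨l₁.length, by simpa using hv⟩
  · rintro ⟨p, hlen, hv⟩
    exact ⟨_, ((List.take_prefix _ _).isInfix).trans (List.drop_suffix _ _).isInfix, hlen, hv⟩

variable [DecidableEq A] {m : ℕ} {one : A}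

def IsFinal (m : ℕ) (q : Finset ℕ × ℕ) : Prop := m ≤ q.1.sup id + q.2

def Represents (m : ℕ) (one : A) (π : ℕ → Finset A) (w : List A) (q : Finset ℕ × ℕ) : Prop :=
  ∃ u, w = u ++ List.replicate q.2 one ∧ u.getLast? ≠ some one ∧
    ∀ x, x ∈ q.1 ↔ x ∈ Rpi m one π ∧ MatchesSuffix π x u

theorem mem_Icc_of_mem_Rpi {x : ℕ} (hx : x ∈ Rpi m one π) : x ∈ Finset.Icc 1 m :=
  (Finset.mem_filter.1 hx).1

theorem mem_Rpi_of_mem {x : ℕ} {a : A} (hx : x ∈ Finset.Icc 1 m) (ha : a ∈ π x) (hne : a ≠ one) :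
    x ∈ Rpi m one π :=
  Finset.mem_filter.2 ⟨hx, fun h => hne (Finset.mem_singleton.1 (h ▸ ha))⟩

theorem mem_Rpi_of_matchesSuffix {x : ℕ} {u : List A} (hu : u.getLast? ≠ some one)
    (hx : x ∈ Finset.Icc 1 m) (h : MatchesSuffix π x u) : x ∈ Rpi m one π := by
  obtain ⟨b, hb, hbx⟩ := exists_getLast?_mem_of_matchesSuffix h (by simp at hx; omega)
  exact mem_Rpi_of_mem hx hbx fun hbo => hu (hbo ▸ hb)

theorem represents_nil : Represents m one π [] (∅, 0) := by
  refine ⟨[], rfl, by simp, fun x => ?_⟩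
  simp only [Finset.notMem_empty, false_iff, matchesSuffix_nil_iff, not_and]
  rintro hx rfl
  simpa using mem_Icc_of_mem_Rpi hx

theorem Represents.matchesSuffix_iff (hπ : ∀ i ∈ Finset.Icc 1 m, one ∈ π i) {w : List A}
    {q : Finset ℕ × ℕ} (hq : Represents m one π w q) {y : ℕ} (hy : y ≤ m) :
    MatchesSuffix π y w ↔ y ≤ q.2 ∨ y - q.2 ∈ q.1 := by
  obtain ⟨X, t⟩ := q
  obtain ⟨u, rfl, hu, hX⟩ := hq
  have hone : ∀ i, 0 < i → i ≤ y → one ∈ π i := fun i h0 hiy =>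
    hπ i (Finset.mem_Icc.2 ⟨h0, hiy.trans hy⟩)
  rcases le_or_gt y t with hyt | hty
  · have h := (matchesSuffix_append_replicate (x := 0) (t := y)
      (u := u ++ List.replicate (t - y) one) fun i h0 hiy => hone i h0 (by omega)).2
      (matchesSuffix_zero _)
    rw [zero_add, List.append_assoc, ← List.replicate_add, Nat.sub_add_cancel hyt] at h
    exact iff_of_true h (Or.inl hyt)
  · obtain ⟨x, rfl⟩ : ∃ x, y = x + t := ⟨y - t, by omega⟩
    rw [matchesSuffix_append_replicate fun i _ hi => hone i (by omega) hi, Nat.add_sub_cancel,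
      hX, or_iff_right (by omega), iff_and_self]
    exact mem_Rpi_of_matchesSuffix hu (Finset.mem_Icc.2 ⟨by omega, by omega⟩)

theorem Represents.isFinal_iff (hπ : ∀ i ∈ Finset.Icc 1 m, one ∈ π i) {w : List A}
    {q : Finset ℕ × ℕ} (hq : Represents m one π w q) (hbound : q.1.sup id + q.2 ≤ m) :
    IsFinal m q ↔ MatchesSuffix π m w := by
  rw [hq.matchesSuffix_iff hπ le_rfl, IsFinal]
  rcases le_or_gt m q.2 with h | h
  · exact iff_of_true (by omega) (Or.inl h)
  · rw [or_iff_right (by omega), Finset.mem_iff_le_sup_id (by omega) (by omega)]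
    omega

theorem seedStep_of_isFinal {q : Finset ℕ × ℕ} (hq : IsFinal m q) (a : A) :
    seedStep m one π q a = q :=
  if_pos hq

theorem seedStep_sup_add_le {q : Finset ℕ × ℕ} (hq : ¬ IsFinal m q) (a : A) :
    (seedStep m one π q a).1.sup id + (seedStep m one π q a).2 ≤ m := by
  unfold IsFinal at hq
  unfold seedStep
  rw [if_neg hq]
  split_ifs
  · dsimp only; omega
  · refine (add_zero _).trans_le (Finset.sup_le fun y hy => ?_)
    simp only [Finset.mem_union, Finset.mem_filter, Finset.mem_image] at hy
    rcases hy with ⟨hR, -⟩ | ⟨x, ⟨-, hx, -⟩, rfl⟩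
    · exact (Finset.mem_Icc.1 (mem_Icc_of_mem_Rpi hR)).2
    · exact hx

theorem Represents.seedStep (hπ : ∀ i ∈ Finset.Icc 1 m, one ∈ π i) {w : List A}
    {q : Finset ℕ × ℕ} (hq : Represents m one π w q) (hnf : ¬ IsFinal m q) (a : A) :
    Represents m one π (w ++ [a]) (seedStep m one π q a) := by
  obtain ⟨X, t⟩ := q
  have hmatch := fun y (hy : y ≤ m) => hq.matchesSuffix_iff hπ hy
  obtain ⟨u, rfl, hu, hX⟩ := hq
  simp only [IsFinal] at hnf
  simp only [_root_.seedStep, if_neg hnf]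
  by_cases ha : a = one
  · subst ha
    rw [if_pos rfl]
    exact ⟨u, by simp [List.replicate_succ'], hu, hX⟩
  rw [if_neg ha]
  refine ⟨u ++ List.replicate t one ++ [a], (List.append_nil _).symm, by simp [ha], fun y => ?_⟩
  have hXpos : ∀ x ∈ X, x ∈ Finset.Icc 1 m := fun x hx => mem_Icc_of_mem_Rpi ((hX x).1 hx).1
  simp only [Finset.mem_union, Finset.mem_filter, Finset.mem_image]
  rcases y with _ | y
  · simp [Rpi]
  -- `X_U` collects the matches whose part before `a` lies in the trailing `1`s, `X_V` the others.
  rw [matchesSuffix_concat_succ]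
  constructor
  · rintro (⟨hR, hyt, hay⟩ | ⟨x, ⟨hxX, hxm, hax⟩, hxy⟩)
    · have := Finset.mem_Icc.1 (mem_Icc_of_mem_Rpi hR)
      exact ⟨hR, (hmatch y (by omega)).2 (Or.inl (by omega)), hay⟩
    · have := Finset.mem_Icc.1 (hXpos x hxX)
      obtain rfl : y = x + t := by omega
      refine ⟨mem_Rpi_of_mem (Finset.mem_Icc.2 ⟨by omega, hxm⟩) hax ha,
        (hmatch (x + t) (by omega)).2 (Or.inr (by rwa [Nat.add_sub_cancel])), hax⟩
  · rintro ⟨hR, hms, hay⟩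
    have := Finset.mem_Icc.1 (mem_Icc_of_mem_Rpi hR)
    rcases (hmatch y (by omega)).1 hms with hyt | hyX
    · exact Or.inl ⟨hR, by omega, hay⟩
    · have := Finset.mem_Icc.1 (hXpos _ hyX)
      exact Or.inr ⟨y - t, ⟨hyX, by omega, by rwa [show y - t + t + 1 = y + 1 by omega]⟩,
        by omega⟩

theorem seedRun_append_singleton (q : Finset ℕ × ℕ) (s : List A) (a : A) :
    seedRun m one π q (s ++ [a]) = seedStep m one π (seedRun m one π q s) a := by
  induction s generalizing q with
  | nil => rfl
  | cons b s ih => exact ih _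

theorem isFinal_seedRun_iff_occurs_and_represents (hπ : ∀ i ∈ Finset.Icc 1 m, one ∈ π i) (s : List A) :
    (IsFinal m (seedRun m one π (∅, 0) s) ↔ Occurs π m s) ∧
      (¬ IsFinal m (seedRun m one π (∅, 0) s) →
        Represents m one π s (seedRun m one π (∅, 0) s)) := by
  induction s using List.reverseRecOn with
  | nil =>
    refine ⟨?_, fun _ => represents_nil⟩
    rw [seedRun, occurs_nil_iff]
    exact represents_nil.isFinal_iff hπ (by simp)
  | append_singleton s a ih =>
    rw [seedRun_append_singleton, occurs_concat_iff]
    by_cases hq : IsFinal m (seedRun m one π (∅, 0) s)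
    · rw [seedStep_of_isFinal hq]
      exact ⟨iff_of_true hq (Or.inl (ih.1.1 hq)), fun h => absurd hq h⟩
    · have hrep := (ih.2 hq).seedStep hπ hq a
      refine ⟨?_, fun _ => hrep⟩
      rw [hrep.isFinal_iff hπ (seedStep_sup_add_le hq a), or_iff_right (mt ih.1.2 hq)]

end SubsetSeed

/-- The automaton `S_π` accepts exactly the words in which `π` occurs:
`ψ*((∅,0), s)` is a final state iff there is a position `p` such that the factor of `s` of
length `m` starting after position `p` matches `π` letterwise (the `Forall₂` condition forces
in particular `p + m ≤ |s|`). -/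
theorem seedAutomaton_final_iff_occurrence
    {A : Type*} [DecidableEq A] (m : ℕ) (one : A) (π : ℕ → Finset A)
    (hπ : ∀ i ∈ Finset.Icc 1 m, one ∈ π i)
    (s : List A) :
    m ≤ (seedRun m one π (∅, 0) s).1.sup id + (seedRun m one π (∅, 0) s).2 ↔
      ∃ p : ℕ, List.Forall₂ (fun (b : Finset A) (a : A) => a ∈ b)
        ((List.range m).map (fun i => π (i + 1))) ((s.drop p).take m) :=
  (SubsetSeed.isFinal_seedRun_iff_occurs_and_represents hπ s).1.trans SubsetSeed.occurs_iff_exists_forall₂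
end

section
/- Let π be a subset seed of span m over a finite alphabet A with distinguished letter 1, and let s = s_1…s_n ∈ A^n be a word such that q = ψ*((∅,0), s) is a non-final state, say q = (X,t). Then: (a) t equals the length of the longest suffix of s consisting entirely of the letter 1; and (b) X = {x ∈ R_π : x ≤ n − t and s_{(n−t)−x+i} ∈ π_i for all i ∈ [1..x]}, i.e., X consists of exactly those positions x ∈ R_π such that the prefix π_1⋯π_x of π matches the suffix of length x of s_1⋯s_{n−t}. -/
/-! Induct on the word, writing the part read so far as `w 1^t` with `w` empty or ending in a
letter other than `1`. Reading `1` only lengthens the run of ones. Reading `a ≠ 1`, the prefix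
`π_1 ⋯ π_x` matches a suffix of `w 1^t a` iff `a ∈ π_x` and `π_1 ⋯ π_{x-1}` matches a suffix of
`w 1^t`. Since every `π_i` contains `1`, the latter is automatic for `x ≤ t + 1` (the set `X_U`),
and for larger `x` it says that `π_1 ⋯ π_{x-t-1}` matches a suffix of `w` (the set `X_V`); as the
last letter of `w` is not `1`, such a position `x - t - 1` lies in `R_π`. -/

open List

section SuffixMatching

variable {A : Type*}

def PrefixMatchesSuffix (π : ℕ → Finset A) (x : ℕ) (w : List A) : Prop :=
  Forall₂ (fun b a => a ∈ b) ((range x).map fun i => π (i + 1)) (w.drop (w.length - x))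

variable {π : ℕ → Finset A}

theorem PrefixMatchesSuffix.le_length {x : ℕ} {w : List A} (h : PrefixMatchesSuffix π x w) :
    x ≤ w.length := by
  have := h.length_eq
  simp only [length_map, length_range, length_drop] at this
  omega

@[simp]
theorem prefixMatchesSuffix_zero (w : List A) : PrefixMatchesSuffix π 0 w := by
  simp [PrefixMatchesSuffix]

theorem prefixMatchesSuffix_iff {x : ℕ} {w : List A} :
    PrefixMatchesSuffix π x w ↔ x ≤ w.length ∧
      Forall₂ (fun b a => a ∈ b) ((range x).map fun i => π (i + 1)) (w.drop (w.length - x)) :=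
  ⟨fun h => ⟨h.le_length, h⟩, And.right⟩

theorem prefixMatchesSuffix_succ_append_singleton {x : ℕ} {w : List A} {a : A} :
    PrefixMatchesSuffix π (x + 1) (w ++ [a]) ↔ a ∈ π (x + 1) ∧ PrefixMatchesSuffix π x w := by
  rw [PrefixMatchesSuffix, length_append, length_singleton, Nat.add_sub_add_right,
    drop_append_of_le_length (Nat.sub_le _ _), range_succ, map_append, map_singleton,
    ← forall₂_reverse_iff]
  simp [forall₂_reverse_iff, PrefixMatchesSuffix]

theorem prefixMatchesSuffix_add_append_replicate {y k : ℕ} {w : List A} {b : A}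
    (hb : ∀ i ∈ Finset.Ioc y (y + k), b ∈ π i) :
    PrefixMatchesSuffix π (y + k) (w ++ replicate k b) ↔ PrefixMatchesSuffix π y w := by
  induction k with
  | zero => simp
  | succ k ih =>
    rw [replicate_succ', ← append_assoc, ← add_assoc, prefixMatchesSuffix_succ_append_singleton,
      ih fun i hi => hb i (Finset.Ioc_subset_Ioc_right (by omega) hi)]
    simp [hb (y + k + 1) (by simp)]

theorem prefixMatchesSuffix_append_replicate_of_le {x k : ℕ} {w : List A} {b : A} (hxk : x ≤ k)
    (hb : ∀ i ∈ Finset.Ioc 0 x, b ∈ π i) : PrefixMatchesSuffix π x (w ++ replicate k b) := by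
  have hsplit : w ++ replicate k b = (w ++ replicate (k - x) b) ++ replicate x b := by
    rw [append_assoc, ← replicate_add, Nat.sub_add_cancel hxk]
  have h := prefixMatchesSuffix_add_append_replicate (π := π) (w := w ++ replicate (k - x) b)
    (zero_add x ▸ hb)
  rw [zero_add] at h
  rw [hsplit, h]
  exact prefixMatchesSuffix_zero _

end SuffixMatching

section TrailingLetters

variable {A : Type*} [DecidableEq A] (one : A)

theorem exists_eq_append_replicate_takeWhile (l : List A) :
    ∃ w, l = w ++ replicate (l.reverse.takeWhile fun a => decide (a = one)).length one ∧
      ∀ w' c, w = w' ++ [c] → c ≠ one := by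
  set p : A → Bool := fun a => decide (a = one)
  have htake : l.reverse.takeWhile p = replicate (l.reverse.takeWhile p).length one :=
    eq_replicate_iff.2 ⟨rfl, fun b hb => by simpa [p] using mem_takeWhile_imp hb⟩
  refine ⟨(l.reverse.dropWhile p).reverse, ?_, fun w' c hw => ?_⟩
  · conv_lhs => rw [← reverse_reverse l, ← takeWhile_append_dropWhile (p := p) (l := l.reverse)]
    rw [reverse_append, htake, reverse_replicate, length_replicate]
  · rw [reverse_eq_append_iff, reverse_singleton, singleton_append] at hw
    have := head_dropWhile_not p (l := l.reverse) (by simp [hw])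
    simpa [hw, p] using this

end TrailingLetters

section Automaton

variable {A : Type*} [DecidableEq A] {m : ℕ} {one : A} {π : ℕ → Finset A}

theorem mem_Rpi {x : ℕ} : x ∈ Rpi m one π ↔ 1 ≤ x ∧ x ≤ m ∧ π x ≠ {one} := by
  simp [Rpi, and_assoc]

theorem mem_Rpi_of_mem_of_ne {x : ℕ} {a : A} (hx : 1 ≤ x) (hxm : x ≤ m) (ha : a ∈ π x)
    (hne : a ≠ one) : x ∈ Rpi m one π :=
  mem_Rpi.2 ⟨hx, hxm, fun h => hne (by simpa [h] using ha)⟩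

theorem mem_Rpi_of_prefixMatchesSuffix {y : ℕ} {w : List A} (hy : 1 ≤ y) (hym : y ≤ m)
    (h : PrefixMatchesSuffix π y w) (hw : ∀ w' c, w = w' ++ [c] → c ≠ one) :
    y ∈ Rpi m one π := by
  obtain ⟨y, rfl⟩ : ∃ y', y = y' + 1 := ⟨y - 1, by omega⟩
  have hne : w ≠ [] := ne_nil_of_length_pos (by have := h.le_length; omega)
  rw [← dropLast_append_getLast hne, prefixMatchesSuffix_succ_append_singleton] at h
  exact mem_Rpi_of_mem_of_ne hy hym h.1 (hw _ _ (dropLast_append_getLast hne).symm)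

theorem seedRun_append_singleton (q : Finset ℕ × ℕ) (s : List A) (a : A) :
    seedRun m one π q (s ++ [a]) = seedStep m one π (seedRun m one π q s) a := by
  induction s generalizing q with
  | nil => rfl
  | cons b s ih => exact ih _

theorem seedStep_eq_self_of_le {X : Finset ℕ} {t : ℕ} (a : A) (h : m ≤ X.sup id + t) :
    seedStep m one π (X, t) a = (X, t) :=
  if_pos h

theorem seedStep_one {X : Finset ℕ} {t : ℕ} (h : X.sup id + t < m) :
    seedStep m one π (X, t) one = (X, t + 1) := by
  simp [seedStep, not_le.2 h]

theorem seedStep_snd_of_ne {X : Finset ℕ} {t : ℕ} {a : A} (h : X.sup id + t < m)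
    (ha : a ≠ one) : (seedStep m one π (X, t) a).2 = 0 := by
  simp [seedStep, not_le.2 h, ha]

theorem mem_seedStep_fst_iff (hπ : ∀ i ∈ Finset.Icc 1 m, one ∈ π i) {X : Finset ℕ} {t : ℕ}
    {a : A} {w : List A} (hnf : X.sup id + t < m) (ha : a ≠ one)
    (hw : ∀ w' c, w = w' ++ [c] → c ≠ one)
    (hX : ∀ y, y ∈ X ↔ y ∈ Rpi m one π ∧ PrefixMatchesSuffix π y w) (x : ℕ) :
    x ∈ (seedStep m one π (X, t) a).1 ↔
      x ∈ Rpi m one π ∧ PrefixMatchesSuffix π x (w ++ replicate t one ++ [a]) := by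
  have hones : ∀ k n, n ≤ m → ∀ i ∈ Finset.Ioc k n, one ∈ π i := fun k n hn i hi =>
    hπ i (by simp only [Finset.mem_Ioc, Finset.mem_Icc] at hi ⊢; omega)
  simp only [seedStep, if_neg (not_le.2 hnf), if_neg ha, Finset.mem_union, Finset.mem_filter,
    Finset.mem_image]
  rcases x with _ | x
  · simp [mem_Rpi]
  rw [prefixMatchesSuffix_succ_append_singleton]
  by_cases hxt : x ≤ t
  · constructor
    · rintro (⟨hxR, -, hxa⟩ | ⟨y, ⟨hyX, -, -⟩, hyx⟩)
      · exact ⟨hxR, hxa, prefixMatchesSuffix_append_replicate_of_le hxt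
          (hones 0 x (by have := mem_Rpi.1 hxR; omega))⟩
      · have := mem_Rpi.1 ((hX y).1 hyX).1
        omega
    · rintro ⟨hxR, hxa, -⟩
      exact Or.inl ⟨hxR, by omega, hxa⟩
  · obtain ⟨y, rfl⟩ : ∃ y, x = y + t := ⟨x - t, by omega⟩
    constructor
    · rintro (⟨-, hyt, -⟩ | ⟨y', ⟨hyX, hym, hya⟩, hyy⟩)
      · omega
      obtain rfl : y = y' := by omega
      refine ⟨mem_Rpi_of_mem_of_ne (by omega) hym hya ha, hya, ?_⟩
      exact (prefixMatchesSuffix_add_append_replicate (hones y (y + t) (by omega))).2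
        ((hX y).1 hyX).2
    · rintro ⟨hxR, hxa, hyw⟩
      have hxm := (mem_Rpi.1 hxR).2.1
      have hy := (prefixMatchesSuffix_add_append_replicate (hones y (y + t) (by omega))).1 hyw
      exact Or.inr ⟨y, ⟨(hX y).2 ⟨mem_Rpi_of_prefixMatchesSuffix (by omega) (by omega) hy hw, hy⟩,
        hxm, hxa⟩, rfl⟩

theorem seedRun_invariant (hπ : ∀ i ∈ Finset.Icc 1 m, one ∈ π i) (s : List A)
    {X : Finset ℕ} {t : ℕ} (hq : seedRun m one π (∅, 0) s = (X, t)) (hnf : X.sup id + t < m) :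
    t = (s.reverse.takeWhile fun a => decide (a = one)).length ∧
      ∀ x, x ∈ X ↔ x ∈ Rpi m one π ∧ PrefixMatchesSuffix π x (s.take (s.length - t)) := by
  induction s using reverseRecOn generalizing X t with
  | nil =>
    obtain ⟨rfl, rfl⟩ := Prod.mk.inj hq.symm
    refine ⟨rfl, fun x => ⟨fun hx => absurd hx (Finset.notMem_empty x), fun ⟨hxR, hx⟩ => ?_⟩⟩
    have := hx.le_length
    simp [mem_Rpi] at hxR this
    omega
  | append_singleton s a ih =>
    rw [seedRun_append_singleton] at hq
    rcases hs : seedRun m one π (∅, 0) s with ⟨X', t'⟩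
    rw [hs] at hq
    have hnf' : X'.sup id + t' < m := by
      by_contra h
      obtain ⟨rfl, rfl⟩ := Prod.mk.inj (hq ▸ (seedStep_eq_self_of_le a (not_lt.1 h)).symm)
      exact h hnf
    obtain ⟨ht', hX'⟩ := ih hs hnf'
    obtain ⟨w, hsw, hw⟩ := exists_eq_append_replicate_takeWhile one s
    rw [← ht'] at hsw
    have hsw' : s.take (s.length - t') = w := by rw [hsw]; simp
    rw [hsw'] at hX'
    by_cases ha : a = one
    · subst ha
      obtain ⟨rfl, rfl⟩ := Prod.mk.inj (hq ▸ (seedStep_one hnf').symm)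
      refine ⟨by simp [ht'], fun x => ?_⟩
      rw [hX', length_append, length_singleton, Nat.add_sub_add_right,
        take_append_of_le_length (Nat.sub_le _ _), hsw']
    · have hX := mem_seedStep_fst_iff hπ hnf' ha hw hX'
      have ht := seedStep_snd_of_ne (π := π) hnf' ha
      rw [hq] at hX ht
      subst ht
      refine ⟨by simp [ha], fun x => ?_⟩
      rw [hX, Nat.sub_zero, take_length, ← hsw]

end Automaton

/-- state invariant of `S_π`: if reading `s` from the initial state leads to a
non-final state `(X, t)`, then (a) `t` is the length of the longest suffix of `s` consisting
of the letter `one`, and (b) `X` consists exactly of the positions `x ∈ R_π` with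
`x ≤ |s| − t` such that the prefix `π_1 ⋯ π_x` matches the suffix of length `x` of
`s_1 ⋯ s_{|s|−t}`. -/
theorem seedAutomaton_state_invariant
    {A : Type*} [DecidableEq A] (m : ℕ) (one : A) (π : ℕ → Finset A)
    (hπ : ∀ i ∈ Finset.Icc 1 m, one ∈ π i)
    (s : List A) (X : Finset ℕ) (t : ℕ)
    (hq : seedRun m one π (∅, 0) s = (X, t))
    (hnf : X.sup id + t < m) :
    t = (s.reverse.takeWhile (fun a => decide (a = one))).length ∧
    ∀ x : ℕ, x ∈ X ↔ x ∈ Rpi m one π ∧ x ≤ s.length - t ∧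
      List.Forall₂ (fun (b : Finset A) (a : A) => a ∈ b)
        ((List.range x).map (fun i => π (i + 1)))
        ((s.take (s.length - t)).drop (s.length - t - x)) := by
  obtain ⟨ht, hX⟩ := seedRun_invariant hπ s hq hnf
  refine ⟨ht, fun x => ?_⟩
  rw [hX, prefixMatchesSuffix_iff, length_take_of_le (Nat.sub_le _ _)]
end

section
/- Let π be a subset seed of span m over a finite alphabet A with distinguished letter 1, let r = |R_π| and w = m − r. Then every non-final state (X,t) reachable in S_π from the initial state (∅,0) satisfies max(X ∪ {0}) + t ≤ m − 1, and the set of all pairs (X,t) with X ⊆ R_π, t ∈ ℕ and max(X ∪ {0}) + t ≤ m − 1 has cardinality at most (w+1)·2^r − 1. Consequently, counting all final states as a single state, the automaton S_π has at most (w+1)·2^r states. -/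
/-!
A non-final state `(X, t)` has `max X + t < m` by definition, so for fixed `X` there are
`m - max X` admissible values of `t`. Summing over `X ⊆ R`, induct on the largest element `a`
of `R`: the `2 ^ (r - 1)` subsets containing `a` all have maximum `a`, and `a ≥ r` because
`R ⊆ [1..m]`, so each of them contributes at most `m - r = w`.
-/

open Finset

theorem card_filter_sup_add_lt_product_range (S : Finset (Finset ℕ)) (m : ℕ) :
    ((S ×ˢ range m).filter (fun q : Finset ℕ × ℕ => q.1.sup id + q.2 + 1 ≤ m)).card
      = ∑ X ∈ S, (m - X.sup id) := by
  rw [card_filter, sum_product]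
  refine sum_congr rfl fun X _ => ?_
  have hfiber : (range m).filter (fun t => X.sup id + t + 1 ≤ m) = range (m - X.sup id) := by
    ext t
    simp only [mem_filter, mem_range]
    omega
  rw [← card_filter, hfiber, card_range]

theorem sum_powerset_sub_sup_add_one_le {m : ℕ} {R : Finset ℕ} (hR : R ⊆ Icc 1 m) :
    ∑ X ∈ R.powerset, (m - X.sup id) + 1 ≤ (m - R.card + 1) * 2 ^ R.card := by
  induction R using Finset.induction_on_max with
  | empty => simp
  | insert a s ha ih =>
    have has : a ∉ s := fun h => (ha a h).false
    have hs : s ⊆ Icc 1 m := (subset_insert a s).trans hR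
    obtain ⟨ha1, ham⟩ := mem_Icc.mp (hR (mem_insert_self a s))
    have hcard : s.card < a :=
      calc s.card ≤ (Ico 1 a).card :=
            card_le_card fun x hx => mem_Ico.mpr ⟨(mem_Icc.mp (hs hx)).1, ha x hx⟩
        _ < a := by rw [Nat.card_Ico]; omega
    have hinsert : ∑ X ∈ s.powerset, (m - (insert a X).sup id) = 2 ^ s.card * (m - a) := by
      rw [← card_powerset, ← smul_eq_mul, ← sum_const]
      refine sum_congr rfl fun X hX => ?_
      have hXa : X.sup id ≤ a := Finset.sup_le fun x hx => (ha x (mem_powerset.mp hX hx)).le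
      rw [sup_insert, id_eq, max_eq_left hXa]
    rw [sum_powerset_insert has, hinsert, card_insert_of_notMem has, pow_succ]
    obtain ⟨k, rfl⟩ : ∃ k, m = s.card + 1 + k := ⟨m - s.card - 1, by omega⟩
    have ih := ih hs
    rw [show s.card + 1 + k - s.card + 1 = k + 2 by omega] at ih
    rw [show s.card + 1 + k - (s.card + 1) + 1 = k + 1 by omega]
    have hcontrib : 2 ^ s.card * (s.card + 1 + k - a) ≤ 2 ^ s.card * k :=
      Nat.mul_le_mul_left _ (by omega)
    nlinarith

theorem seedAutomaton_number_of_states_general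
    {A : Type*} [DecidableEq A] (m : ℕ) (one : A) (π : ℕ → Finset A) :
    (∀ (X : Finset ℕ) (t : ℕ), (∃ u : List A, seedRun m one π (∅, 0) u = (X, t)) →
        ¬ (m ≤ X.sup id + t) → X.sup id + t + 1 ≤ m) ∧
    ((((Rpi m one π).powerset ×ˢ Finset.range m).filter
        (fun q : Finset ℕ × ℕ => q.1.sup id + q.2 + 1 ≤ m)).card
      ≤ (m - (Rpi m one π).card + 1) * 2 ^ (Rpi m one π).card - 1) ∧
    ((((Rpi m one π).powerset ×ˢ Finset.range m).filter
        (fun q : Finset ℕ × ℕ => q.1.sup id + q.2 + 1 ≤ m)).card + 1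
      ≤ (m - (Rpi m one π).card + 1) * 2 ^ (Rpi m one π).card) := by
  have hbound : ∑ X ∈ (Rpi m one π).powerset, (m - X.sup id) + 1
      ≤ (m - (Rpi m one π).card + 1) * 2 ^ (Rpi m one π).card :=
    sum_powerset_sub_sup_add_one_le (filter_subset _ _)
  rw [card_filter_sup_add_lt_product_range]
  exact ⟨fun X t _ h => by omega, by omega, hbound⟩

/-- every reachable non-final state `(X,t)` of `S_π` satisfies
`max(X ∪ {0}) + t ≤ m − 1` (expressed as `X.sup id + t + 1 ≤ m`); the set of all pairs
`(X,t)` with `X ⊆ R_π` and `max(X ∪ {0}) + t ≤ m − 1` has cardinality at most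
`(w+1)·2^r − 1`, where `r = |R_π|` and `w = m − r`; consequently, counting all final
states as a single state, `S_π` has at most `(w+1)·2^r` states. -/
theorem seedAutomaton_number_of_states
    {A : Type*} [DecidableEq A] (m : ℕ) (one : A) (π : ℕ → Finset A)
    (hπ : ∀ i ∈ Finset.Icc 1 m, one ∈ π i) :
    (∀ (X : Finset ℕ) (t : ℕ), (∃ u : List A, seedRun m one π (∅, 0) u = (X, t)) →
        ¬ (m ≤ X.sup id + t) → X.sup id + t + 1 ≤ m) ∧
    ((((Rpi m one π).powerset ×ˢ Finset.range m).filter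
        (fun q : Finset ℕ × ℕ => q.1.sup id + q.2 + 1 ≤ m)).card
      ≤ (m - (Rpi m one π).card + 1) * 2 ^ (Rpi m one π).card - 1) ∧
    ((((Rpi m one π).powerset ×ˢ Finset.range m).filter
        (fun q : Finset ℕ × ℕ => q.1.sup id + q.2 + 1 ≤ m)).card + 1
      ≤ (m - (Rpi m one π).card + 1) * 2 ^ (Rpi m one π).card) :=
  seedAutomaton_number_of_states_general m one π
end

section
/- Let r ≥ 1 and let π be the spaced seed of span m = r + 2 over the binary alphabet {0,1} with π_1 = π_{r+2} = {1} and π_i = {0,1} for 2 ≤ i ≤ r + 1 (so R_π = {2, …, r+1}). Then every non-final state of S_π is reachable from the initial state: for every pair (X,t) with X ⊆ {2, …, r+1}, t ∈ ℕ and max(X ∪ {0}) + t ≤ r + 1, there exists a word u ∈ {0,1}* with ψ*((∅,0), u) = (X,t). -/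
lemma run_append {A : Type*} [DecidableEq A] (m : ℕ) (one : A) (π : ℕ → Finset A)
    (q : Finset ℕ × ℕ) (u v : List A) :
    seedRun m one π q (u ++ v) = seedRun m one π (seedRun m one π q u) v := by
  induction u generalizing q with
  | nil => rfl
  | cons a u ih => simp only [List.cons_append, seedRun]; exact ih _

section
variable (r : ℕ) (π : ℕ → Finset (Fin 2))
  (hπ1 : π 1 = {1}) (hπmid : ∀ i : ℕ, 2 ≤ i → i ≤ r + 1 → π i = Finset.univ)
include hπ1 hπmid
set_option linter.unusedSectionVars false

lemma step_one (X : Finset ℕ) (t : ℕ) (h : X.sup id + t ≤ r + 1) :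
    seedStep (r+2) 1 π (X, t) 1 = (X, t+1) := by
  unfold seedStep
  rw [if_neg (show ¬ (r + 2 ≤ X.sup id + t) by omega), if_pos rfl]

lemma run_ones (t : ℕ) : ∀ (s : ℕ) (X : Finset ℕ),
    (∀ x ∈ X, x + s + t ≤ r + 1) → s + t ≤ r + 1 →
    seedRun (r+2) 1 π (X, s) (List.replicate t 1) = (X, s + t) := by
  induction t with
  | zero => intro s X _ _; simp [seedRun]
  | succ t ih =>
    intro s X h h0
    have hsup : X.sup id + s ≤ r + 1 := by
      have : X.sup id ≤ r + 1 - s := Finset.sup_le fun x hx => by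
        have := h x hx; simp only [id]; omega
      omega
    rw [List.replicate_succ]
    simp only [seedRun]
    rw [step_one r π hπ1 hπmid X s hsup]
    have := ih (s+1) X (fun x hx => by have := h x hx; omega) (by omega)
    rw [this]
    congr 1
    omega

lemma step_zero (X : Finset ℕ) (t : ℕ) (hX : X ⊆ Finset.Icc 2 (r+1))
    (h1 : t + 1 ≤ r + 1) (h2 : ∀ x ∈ X, x + t + 1 ≤ r + 1) :
    seedStep (r+2) 1 π (X, t) 0 =
      (Finset.Icc 2 (t+1) ∪ X.image (fun x => x + t + 1), 0) := by
  have hsup : X.sup id ≤ r - t := Finset.sup_le fun x hx => by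
    have := h2 x hx; simp only [id]; omega
  unfold seedStep
  rw [if_neg (show ¬ (r + 2 ≤ X.sup id + t) by omega),
      if_neg (show ¬ ((0 : Fin 2) = 1) by decide)]
  simp only
  congr 1
  congr 1
  · ext x
    simp only [Rpi, Finset.mem_filter, Finset.mem_Icc]
    constructor
    · rintro ⟨⟨⟨h1x, _⟩, hne⟩, hle, _⟩
      refine ⟨?_, hle⟩
      by_contra h
      have hx1 : x = 1 := by omega
      exact hne (hx1 ▸ hπ1)
    · rintro ⟨hx2, hxt⟩
      have hxr : x ≤ r + 1 := by omega
      have hu := hπmid x hx2 hxr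
      refine ⟨⟨⟨by omega, by omega⟩, ?_⟩, hxt, ?_⟩
      · rw [hu]; decide
      · rw [hu]; exact Finset.mem_univ 0
  · congr 1
    apply Finset.filter_true_of_mem
    intro x hx
    have hx2 := Finset.mem_Icc.mp (hX hx)
    have := h2 x hx
    refine ⟨by omega, ?_⟩
    rw [hπmid (x+t+1) (by omega) (by omega)]
    exact Finset.mem_univ 0

lemma run_zeros (k : ℕ) : ∀ (X : Finset ℕ), X ⊆ Finset.Icc 2 (r+1) →
    (∀ x ∈ X, x + k ≤ r + 1) →
    seedRun (r+2) 1 π (X, 0) (List.replicate k 0) = (X.image (fun x => x + k), 0) := by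
  induction k with
  | zero =>
    intro X _ _
    simp only [List.replicate_zero, seedRun]
    congr 1
    ext x
    simp
  | succ k ih =>
    intro X hX h
    rw [List.replicate_succ]
    simp only [seedRun]
    rw [step_zero r π hπ1 hπmid X 0 hX (by omega) (fun x hx => by have := h x hx; omega)]
    rw [show Finset.Icc 2 (0+1) = ∅ from Finset.Icc_eq_empty (by omega), Finset.empty_union]
    have hsub : (X.image fun x => x + 0 + 1) ⊆ Finset.Icc 2 (r+1) := by
      intro y hy
      obtain ⟨x, hx, rfl⟩ := Finset.mem_image.mp hy
      have := Finset.mem_Icc.mp (hX hx)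
      have := h x hx
      exact Finset.mem_Icc.mpr ⟨by omega, by omega⟩
    have hbnd : ∀ y ∈ X.image (fun x => x + 0 + 1), y + k ≤ r + 1 := by
      intro y hy
      obtain ⟨x, hx, rfl⟩ := Finset.mem_image.mp hy
      have := h x hx
      omega
    rw [ih _ hsub hbnd, Finset.image_image]
    refine congrArg (fun s => (s, 0)) (Finset.image_congr fun x _ => ?_)
    simp only [Function.comp]
    omega

lemma reach0 : ∀ (n : ℕ) (X : Finset ℕ), X.card ≤ n → X ⊆ Finset.Icc 2 (r+1) →
    ∃ u : List (Fin 2), seedRun (r+2) 1 π (∅, 0) u = (X, 0) := by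
  intro n
  induction n with
  | zero =>
    intro X hc _
    have hXe : X = ∅ := Finset.card_eq_zero.mp (Nat.le_zero.mp hc)
    exact ⟨[], by rw [hXe]; rfl⟩
  | succ n ih =>
    intro X hc hX
    rcases X.eq_empty_or_nonempty with rfl | hne
    · exact ⟨[], rfl⟩
    set a := X.min' hne with ha
    have haX : a ∈ X := X.min'_mem hne
    have ha2 : 2 ≤ a := (Finset.mem_Icc.mp (hX haX)).1
    have har : a ≤ r + 1 := (Finset.mem_Icc.mp (hX haX)).2
    have hamin : ∀ x ∈ X, a ≤ x := fun x hx => X.min'_le x hx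
    set D := Finset.Icc a (r+2) \ X with hD
    have hDne : D.Nonempty := by
      refine ⟨r+2, Finset.mem_sdiff.mpr ⟨Finset.mem_Icc.mpr ⟨by omega, le_refl _⟩, ?_⟩⟩
      intro hxX
      have := (Finset.mem_Icc.mp (hX hxX)).2
      omega
    set g := D.min' hDne with hg
    have hgD : g ∈ D := D.min'_mem hDne
    have hgX : g ∉ X := (Finset.mem_sdiff.mp hgD).2
    have hga : a ≤ g := (Finset.mem_Icc.mp (Finset.mem_sdiff.mp hgD).1).1
    have hgr : g ≤ r + 2 := (Finset.mem_Icc.mp (Finset.mem_sdiff.mp hgD).1).2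
    have hga' : a + 1 ≤ g := by
      rcases Nat.lt_or_ge a g with h | h
      · omega
      · have hge : g = a := by omega
        exact absurd (hge ▸ haX) hgX
    set b := g - 1 with hb
    have hab : a ≤ b := by omega
    have hbr : b ≤ r + 1 := by omega
    have hbg : b + 1 = g := by omega
    have hrun : ∀ x, a ≤ x → x ≤ b → x ∈ X := by
      intro x h1 h2
      by_contra hx
      have hxD : x ∈ D := Finset.mem_sdiff.mpr ⟨Finset.mem_Icc.mpr ⟨h1, by omega⟩, hx⟩
      have := D.min'_le x hxD
      omega
    have hgap : ∀ x ∈ X, ¬ (x ≤ b) → b + 2 ≤ x := by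
      intro x hx h
      have := hamin x hx
      have hxg : x ≠ g := fun h' => hgX (h' ▸ hx)
      omega
    set Z := (X \ Finset.Icc a b).image (fun x => x - b) with hZ
    have hZmem : ∀ z ∈ Z, 2 ≤ z ∧ z + b ≤ r + 1 ∧ z + b ∈ X := by
      intro z hz
      obtain ⟨y, hy, rfl⟩ := Finset.mem_image.mp hz
      have hyX := (Finset.mem_sdiff.mp hy).1
      have hynI := (Finset.mem_sdiff.mp hy).2
      have hyb : b + 2 ≤ y := hgap y hyX (fun h => hynI (Finset.mem_Icc.mpr ⟨hamin y hyX, h⟩))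
      have hyr : y ≤ r + 1 := (Finset.mem_Icc.mp (hX hyX)).2
      refine ⟨by omega, by omega, ?_⟩
      have hyy : y - b + b = y := by omega
      rw [hyy]; exact hyX
    have hZsub : Z ⊆ Finset.Icc 2 (r+1) := fun z hz => by
      have := hZmem z hz
      exact Finset.mem_Icc.mpr ⟨this.1, by omega⟩
    have hZcard : Z.card ≤ n := by
      have h1 : Z.card ≤ (X \ Finset.Icc a b).card := Finset.card_image_le
      have h2 : (X \ Finset.Icc a b).card < X.card := by
        apply Finset.card_lt_card
        rw [Finset.ssubset_iff_of_subset Finset.sdiff_subset]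
        exact ⟨a, haX, fun h => (Finset.mem_sdiff.mp h).2 (Finset.mem_Icc.mpr ⟨le_refl a, hab⟩)⟩
      omega
    obtain ⟨u, hu⟩ := ih Z hZcard hZsub
    refine ⟨u ++ (List.replicate (b - a + 1) 1 ++ ((0 : Fin 2) :: List.replicate (a - 2) 0)), ?_⟩
    rw [run_append, hu, run_append]
    rw [run_ones r π hπ1 hπmid (b - a + 1) 0 Z
      (fun z hz => by have := hZmem z hz; omega) (by omega)]
    rw [Nat.zero_add]
    simp only [seedRun]
    rw [step_zero r π hπ1 hπmid Z (b - a + 1) hZsub (by omega)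
      (fun z hz => by have := hZmem z hz; omega)]
    have hWsub : (Finset.Icc 2 (b - a + 1 + 1) ∪ Z.image (fun z => z + (b - a + 1) + 1))
        ⊆ Finset.Icc 2 (r+1) := by
      intro x hx
      rcases Finset.mem_union.mp hx with h | h
      · have := Finset.mem_Icc.mp h
        exact Finset.mem_Icc.mpr ⟨this.1, by omega⟩
      · obtain ⟨z, hz, rfl⟩ := Finset.mem_image.mp h
        have := hZmem z hz
        exact Finset.mem_Icc.mpr ⟨by omega, by omega⟩
    have hWbnd : ∀ x ∈ (Finset.Icc 2 (b - a + 1 + 1) ∪ Z.image (fun z => z + (b - a + 1) + 1)),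
        x + (a - 2) ≤ r + 1 := by
      intro x hx
      rcases Finset.mem_union.mp hx with h | h
      · have := Finset.mem_Icc.mp h
        omega
      · obtain ⟨z, hz, rfl⟩ := Finset.mem_image.mp h
        have := hZmem z hz
        omega
    rw [run_zeros r π hπ1 hπmid (a - 2) _ hWsub hWbnd]
    congr 1
    ext x
    simp only [Finset.mem_image, Finset.mem_union, Finset.mem_Icc]
    constructor
    · rintro ⟨y, hy | hy, rfl⟩
      · exact hrun _ (by omega) (by omega)
      · obtain ⟨z, hzZ, rfl⟩ := hy
        have := hZmem z hzZ
        have hxe : z + (b - a + 1) + 1 + (a - 2) = z + b := by omega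
        rw [hxe]
        exact this.2.2
    · intro hx
      have hax := hamin x hx
      rcases le_or_gt x b with hxb | hxb
      · exact ⟨x - (a - 2), Or.inl ⟨by omega, by omega⟩, by omega⟩
      · have hxX : x ∈ X \ Finset.Icc a b :=
          Finset.mem_sdiff.mpr ⟨hx, fun h => by have := (Finset.mem_Icc.mp h).2; omega⟩
        have hzZ : x - b ∈ Z := Finset.mem_image_of_mem _ hxX
        have hx2 : b + 2 ≤ x := hgap x hx (by omega)
        have hxr : x ≤ r + 1 := (Finset.mem_Icc.mp (hX hx)).2
        exact ⟨x - b + (b - a + 1) + 1, Or.inr ⟨x - b, hzZ, rfl⟩, by omega⟩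

end

/-- for the spaced seed `π = # _^r #` of span `m = r + 2` over the binary
alphabet `Fin 2` (distinguished letter `1`), every non-final state `(X,t)` of `S_π`
(`X ⊆ {2,…,r+1}`, `max(X ∪ {0}) + t ≤ r + 1`) is reachable from the initial state `(∅,0)`. -/
theorem spacedSeed_all_nonfinal_states_reachable
    (r : ℕ) (hr : 1 ≤ r) (π : ℕ → Finset (Fin 2))
    (hπ1 : π 1 = {1}) (hπlast : π (r + 2) = {1})
    (hπmid : ∀ i : ℕ, 2 ≤ i → i ≤ r + 1 → π i = Finset.univ)
    (X : Finset ℕ) (t : ℕ) (hX : X ⊆ Finset.Icc 2 (r + 1))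
    (hnf : X.sup id + t ≤ r + 1) :
    ∃ u : List (Fin 2), seedRun (r + 2) 1 π (∅, 0) u = (X, t) := by
  obtain ⟨u, hu⟩ := reach0 r π hπ1 hπmid X.card X le_rfl hX
  refine ⟨u ++ List.replicate t 1, ?_⟩
  rw [run_append, hu]
  have h := run_ones r π hπ1 hπmid t 0 X
    (fun x hx => by have : id x ≤ X.sup id := Finset.le_sup hx; simp only [id] at this; omega)
    (by omega)
  rw [h, Nat.zero_add]
end

section
/- Let r ≥ 1 and let π be the spaced seed of span m = r + 2 over the binary alphabet {0,1} with π_1 = π_{r+2} = {1} and π_i = {0,1} for 2 ≤ i ≤ r + 1 (so R_π = {2, …, r+1}). Let X = {x_1 < x_2 < ⋯ < x_k} be a nonempty subset of {2, …, r+1} and let t ∈ ℕ with x_k + t ≤ r + 1. Define the word s ∈ {0,1}^{x_k} by s_i = 1 if there exists j ∈ [1..k] with i = x_k − x_j + 1, and s_i = 0 otherwise. Then ψ*((∅,0), s·1^t) = (X,t), where s·1^t denotes s followed by t copies of the letter 1. -/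
namespace SpacedAux

def w (M : ℕ) (X : Finset ℕ) (q : ℕ) : Fin 2 := if M + 1 - q ∈ X then 1 else 0

lemma w_eq_one {M : ℕ} {X : Finset ℕ} {q : ℕ} : w M X q = 1 ↔ M + 1 - q ∈ X := by
  unfold w; split <;> simp_all

lemma w_eq_zero {M : ℕ} {X : Finset ℕ} {q : ℕ} : w M X q = 0 ↔ M + 1 - q ∉ X := by
  unfold w; split <;> simp_all

def lz (M : ℕ) (X : Finset ℕ) : ℕ → ℕ
  | 0 => 0
  | p+1 => if w M X (p+1) = 0 then p+1 else lz M X p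

lemma lz_succ (M : ℕ) (X : Finset ℕ) (p : ℕ) :
    lz M X (p+1) = if w M X (p+1) = 0 then p+1 else lz M X p := rfl

lemma lz_le (M : ℕ) (X : Finset ℕ) : ∀ p, lz M X p ≤ p
  | 0 => le_refl _
  | p+1 => by
      unfold lz; split
      · exact le_refl _
      · exact (lz_le M X p).trans (Nat.le_succ p)

lemma lz_ones (M : ℕ) (X : Finset ℕ) :
    ∀ p q, lz M X p < q → q ≤ p → w M X q = 1 := by
  intro p
  induction p with
  | zero => intro q h1 h2; omega
  | succ p ih =>
    intro q h1 h2
    unfold lz at h1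
    split at h1
    · omega
    · rcases Nat.lt_or_ge q (p+1) with h | h
      · exact ih q h1 (by omega)
      · have hq : q = p + 1 := by omega
        subst hq
        rename_i hw
        rcases Fin.exists_fin_two.mp ⟨w M X (p+1), rfl⟩ with _
        -- w M X (p+1) ≠ 0 means = 1
        unfold w at hw ⊢
        split at hw <;> simp_all

lemma lz_zero (M : ℕ) (X : Finset ℕ) :
    ∀ p, lz M X p = 0 ∨ w M X (lz M X p) = 0 := by
  intro p
  induction p with
  | zero => left; rfl
  | succ p ih =>
    unfold lz; split
    · right; assumption
    · exact ih

lemma lz_eq_self {M : ℕ} {X : Finset ℕ} {p : ℕ} (hp : 1 ≤ p)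
    (h0 : w M X p = 0) : lz M X p = p := by
  cases p with
  | zero => omega
  | succ p => rw [lz_succ, if_pos h0]

lemma seedRun_append {A : Type*} [DecidableEq A] (m : ℕ) (one : A) (π : ℕ → Finset A)
    (u v : List A) (q : Finset ℕ × ℕ) :
    seedRun m one π q (u ++ v) = seedRun m one π (seedRun m one π q u) v := by
  induction u generalizing q with
  | nil => simp [seedRun]
  | cons a u ih => simp [seedRun, ih]

lemma Rpi_eq (r : ℕ) (π : ℕ → Finset (Fin 2))
    (hπ1 : π 1 = {1}) (hπlast : π (r + 2) = {1})
    (hπmid : ∀ i : ℕ, 2 ≤ i → i ≤ r + 1 → π i = Finset.univ) :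
    Rpi (r+2) 1 π = Finset.Icc 2 (r+1) := by
  ext i
  simp only [Rpi, Finset.mem_filter, Finset.mem_Icc]
  constructor
  · rintro ⟨⟨h1, h2⟩, h3⟩
    refine ⟨?_, ?_⟩
    · rcases Nat.lt_or_ge i 2 with h | h
      · interval_cases i <;> simp_all
      · exact h
    · rcases Nat.lt_or_ge (r+1) i with h | h
      · have : i = r + 2 := by omega
        subst this; simp_all
      · exact h
  · rintro ⟨h1, h2⟩
    refine ⟨⟨by omega, by omega⟩, ?_⟩
    rw [hπmid i h1 h2]
    intro h
    have : (0 : Fin 2) ∈ ({1} : Finset (Fin 2)) := h ▸ Finset.mem_univ 0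
    simp at this

lemma run_replicate (r : ℕ) (π : ℕ → Finset (Fin 2)) :
    ∀ (n : ℕ) (Y : Finset ℕ) (t : ℕ), Y.sup id + t + n < r + 2 →
      seedRun (r+2) 1 π (Y, t) (List.replicate n 1) = (Y, t + n) := by
  intro n
  induction n with
  | zero => intro Y t h; simp [seedRun]
  | succ n ih =>
    intro Y t h
    rw [List.replicate_succ]
    show seedRun (r+2) 1 π (seedStep (r+2) 1 π (Y, t) 1) _ = _
    rw [seedStep]
    rw [if_neg (by simp; omega), if_pos rfl]
    rw [ih Y (t+1) (by omega)]
    congr 1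
    omega

lemma invariant (r : ℕ) (π : ℕ → Finset (Fin 2))
    (hπ1 : π 1 = {1}) (hπlast : π (r + 2) = {1})
    (hπmid : ∀ i : ℕ, 2 ≤ i → i ≤ r + 1 → π i = Finset.univ)
    (X : Finset ℕ) (M : ℕ) (hM2 : 2 ≤ M) (hMr : M ≤ r + 1)
    (hXle : ∀ x ∈ X, 2 ≤ x ∧ x ≤ M) :
    ∀ p, p ≤ M →
      seedRun (r+2) 1 π (∅, 0) ((List.ofFn (fun i : Fin M => w M X ((i:ℕ)+1))).take p)
        = ((Finset.Icc 2 (lz M X p)).filter (fun x => M - lz M X p + x ∈ X),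
            p - lz M X p) := by
  intro p
  induction p with
  | zero => intro _; simp [seedRun, lz]
  | succ p ih =>
    intro hp
    have hp' : p ≤ M := by omega
    have hlzle : lz M X p ≤ p := lz_le M X p
    -- split take
    have htake : (List.ofFn (fun i : Fin M => w M X ((i:ℕ)+1))).take (p+1)
        = (List.ofFn (fun i : Fin M => w M X ((i:ℕ)+1))).take p ++ [w M X (p+1)] := by
      rw [List.take_succ]
      congr 1
      rw [List.getElem?_eq_getElem (by simpa using hp)]
      simp
    rw [htake, seedRun_append, ih hp']
    set p' := lz M X p with hp'def
    set Xp := (Finset.Icc 2 p').filter (fun x => M - p' + x ∈ X) with hXp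
    have hsup : Xp.sup id ≤ p' := by
      apply Finset.sup_le
      intro x hx
      simp only [hXp, Finset.mem_filter, Finset.mem_Icc] at hx
      exact hx.1.2
    show seedRun (r+2) 1 π (seedStep (r+2) 1 π (Xp, p - p') (w M X (p+1))) [] = _
    have hnf : ¬ (r + 2 ≤ Xp.sup id + (p - p')) := by omega
    by_cases hmem : M + 1 - (p+1) ∈ X
    · -- letter is 1
      have hw1 : w M X (p+1) = 1 := w_eq_one.mpr hmem
      rw [seedRun, seedStep, if_neg hnf, hw1, if_pos rfl]
      have hlz : lz M X (p+1) = p' := by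
        rw [lz_succ, if_neg (by rw [hw1]; decide)]
      rw [hlz]
      refine Prod.ext ?_ ?_
      · simp [hXp]
      · simp; omega
    · -- letter is 0
      have hw0 : w M X (p+1) = 0 := w_eq_zero.mpr hmem
      have h01 : (0 : Fin 2) ≠ 1 := by decide
      rw [seedRun, seedStep, if_neg hnf, hw0, if_neg h01]
      have hlz : lz M X (p+1) = p + 1 := by
        rw [lz_succ, if_pos hw0]
      rw [hlz]
      refine Prod.ext ?_ (by simp)
      show (Rpi (r+2) 1 π).filter (fun x => x ≤ (p - p') + 1 ∧ (0:Fin 2) ∈ π x) ∪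
        ((Xp.filter (fun x => x + (p - p') + 1 ≤ r + 2 ∧ (0:Fin 2) ∈ π (x + (p - p') + 1))).image
          (fun x => x + (p - p') + 1))
        = (Finset.Icc 2 (p+1)).filter (fun x => M - (p+1) + x ∈ X)
      rw [Rpi_eq r π hπ1 hπlast hπmid]
      ext z
      simp only [Finset.mem_union, Finset.mem_filter, Finset.mem_Icc, Finset.mem_image]
      constructor
      · rintro (⟨⟨hz2, hzr⟩, hzt, _⟩ | ⟨x, ⟨hxXp, _, _⟩, hxz⟩)
        · -- from X_U : 2 ≤ z ≤ p - p' + 1; position p + 2 - z is a one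
          have hq1 : w M X (p + 2 - z) = 1 := by
            apply lz_ones M X p
            · omega
            · omega
          have hmem' : M + 1 - (p + 2 - z) ∈ X := w_eq_one.mp hq1
          have harg : M + 1 - (p + 2 - z) = M - (p+1) + z := by omega
          exact ⟨⟨hz2, by omega⟩, by rwa [harg] at hmem'⟩
        · simp only [hXp, Finset.mem_filter, Finset.mem_Icc] at hxXp
          obtain ⟨⟨hx2, hxp'⟩, hxX⟩ := hxXp
          have harg : M - p' + x = M - (p+1) + z := by omega
          exact ⟨⟨by omega, by omega⟩, by rwa [harg] at hxX⟩
      · rintro ⟨⟨hz2, hzp⟩, hzX⟩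
        rcases Nat.lt_or_ge (p - p' + 1) z with h | h
        · -- z ≥ p - p' + 2 : comes from X_V, unless z = p - p' + 2 which is impossible
          by_cases hz' : z = p - p' + 2
          · exfalso
            -- then M - (p+1) + z = M + 1 - p' ∉ X
            rcases lz_zero M X p with h0 | h0
            · have : M - (p+1) + z = M + 1 := by omega
              rw [this] at hzX
              have := (hXle _ hzX).2
              omega
            · have hnm : M + 1 - p' ∉ X := w_eq_zero.mp h0
              have : M - (p+1) + z = M + 1 - p' := by omega
              rw [this] at hzX
              exact hnm hzX
          · right
            refine ⟨z - (p - p') - 1, ?_, by omega⟩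
            have hx2 : 2 ≤ z - (p - p') - 1 := by omega
            have hzrb : z ≤ r + 1 := by omega
            refine ⟨?_, by omega, ?_⟩
            · simp only [hXp, Finset.mem_filter, Finset.mem_Icc]
              refine ⟨⟨hx2, by omega⟩, ?_⟩
              have harg : M - p' + (z - (p - p') - 1) = M - (p+1) + z := by omega
              rwa [harg]
            · rw [hπmid (z - (p - p') - 1 + (p - p') + 1) (by omega) (by omega)]
              exact Finset.mem_univ _
        · -- z ≤ p - p' + 1 : in X_U
          left
          refine ⟨⟨hz2, by omega⟩, h, ?_⟩
          rw [hπmid z hz2 (by omega)]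
          exact Finset.mem_univ _

end SpacedAux

/-- for the spaced seed `π = # _^r #` of span `m = r + 2` over `Fin 2`, a
nonempty `X = {x_1 < ⋯ < x_k} ⊆ {2,…,r+1}` and `t` with `x_k + t ≤ r + 1`, the word
`s · 1^t` with `|s| = x_k` and `s_i = 1` iff `i = x_k − x_j + 1` for some `x_j ∈ X`
(positions being 1-indexed, i.e. `s_{i+1}` is entry `i` of the list) drives the automaton
from the initial state `(∅,0)` to the state `(X,t)`. -/
theorem spacedSeed_explicit_word_reaches_state
    (r : ℕ) (hr : 1 ≤ r) (π : ℕ → Finset (Fin 2))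
    (hπ1 : π 1 = {1}) (hπlast : π (r + 2) = {1})
    (hπmid : ∀ i : ℕ, 2 ≤ i → i ≤ r + 1 → π i = Finset.univ)
    (X : Finset ℕ) (hne : X.Nonempty) (hX : X ⊆ Finset.Icc 2 (r + 1))
    (t : ℕ) (ht : X.max' hne + t ≤ r + 1) :
    seedRun (r + 2) 1 π (∅, 0)
      ((List.ofFn (fun i : Fin (X.max' hne) =>
          if ∃ x ∈ X, (i : ℕ) + 1 = X.max' hne - x + 1 then (1 : Fin 2) else 0))
        ++ List.replicate t 1) = (X, t) := by
  set M := X.max' hne with hM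
  have hMmem : M ∈ X := X.max'_mem hne
  have hXle : ∀ x ∈ X, 2 ≤ x ∧ x ≤ M := fun x hx =>
    ⟨(Finset.mem_Icc.mp (hX hx)).1, X.le_max' x hx⟩
  have hM2 : 2 ≤ M := (hXle M hMmem).1
  have hMr : M ≤ r + 1 := (Finset.mem_Icc.mp (hX hMmem)).2
  have hfun : (fun i : Fin M => if ∃ x ∈ X, (i:ℕ)+1 = M - x + 1 then (1:Fin 2) else 0)
      = fun i : Fin M => SpacedAux.w M X ((i:ℕ)+1) := by
    funext i
    unfold SpacedAux.w
    by_cases h : ∃ x ∈ X, (i:ℕ)+1 = M - x + 1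
    · obtain ⟨x, hx, hix⟩ := h
      obtain ⟨hx2, hxM⟩ := hXle x hx
      have harg : M + 1 - ((i:ℕ)+1) = x := by omega
      rw [if_pos ⟨x, hx, hix⟩, if_pos (by rw [harg]; exact hx)]
    · rw [if_neg h, if_neg ?_]
      intro hmem
      obtain ⟨h2, hle⟩ := hXle _ hmem
      have hi : (i:ℕ) < M := i.isLt
      exact h ⟨M + 1 - ((i:ℕ)+1), hmem, by omega⟩
  rw [hfun, SpacedAux.seedRun_append]
  have hinv := SpacedAux.invariant r π hπ1 hπlast hπmid X M hM2 hMr hXle M (le_refl M)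
  rw [List.take_of_length_le (by simp)] at hinv
  rw [hinv]
  have hw0 : SpacedAux.w M X M = 0 := by
    rw [SpacedAux.w_eq_zero]
    intro hmem
    have := (hXle _ hmem).1
    omega
  have hlz : SpacedAux.lz M X M = M := SpacedAux.lz_eq_self (by omega) hw0
  rw [hlz]
  have hXeq : (Finset.Icc 2 M).filter (fun x => M - M + x ∈ X) = X := by
    ext x
    simp only [Finset.mem_filter, Finset.mem_Icc, Nat.sub_self, Nat.zero_add]
    exact ⟨fun h => h.2, fun h => ⟨hXle x h, h⟩⟩
  rw [hXeq, Nat.sub_self]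
  have hsup : X.sup id = M := le_antisymm
    (Finset.sup_le fun x hx => (hXle x hx).2) (Finset.le_sup (f := id) hMmem)
  have := SpacedAux.run_replicate r π t X 0 (by rw [hsup]; omega)
  simpa using this
end

section
/- Let r ≥ 1 and let π be the spaced seed of span m = r + 2 over the binary alphabet {0,1} with π_1 = π_{r+2} = {1} and π_i = {0,1} for 2 ≤ i ≤ r + 1 (so R_π = {2, …, r+1}). Then no two distinct non-final states of S_π are equivalent: for any two distinct pairs q_1 = (X_1,t_1) and q_2 = (X_2,t_2) with X_j ⊆ {2, …, r+1} and max(X_j ∪ {0}) + t_j ≤ r + 1 for j = 1,2, there exists a word u ∈ {0,1}* such that exactly one of ψ*(q_1, u) and ψ*(q_2, u) is a final state. -/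
def IsSeedFinal (m : ℕ) (q : Finset ℕ × ℕ) : Prop :=
  m ≤ q.1.sup id + q.2

def seedProfile (q : Finset ℕ × ℕ) : Finset ℕ :=
  Finset.range (q.2 + 1) ∪ q.1.image (· + q.2)

lemma add_mem_seedProfile_iff {X : Finset ℕ} {t x : ℕ} (hx : 0 < x) :
    x + t ∈ seedProfile (X, t) ↔ x ∈ X := by
  simp only [seedProfile, Finset.mem_union, Finset.mem_range, Finset.mem_image,
    add_left_inj, exists_eq_right]
  exact or_iff_right (by omega)

lemma isGreatest_seedProfile (q : Finset ℕ × ℕ) :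
    IsGreatest (seedProfile q) (q.1.sup id + q.2) := by
  obtain ⟨X, t⟩ := q
  simp only [IsGreatest, upperBounds, Finset.mem_coe, seedProfile, Finset.mem_union,
    Finset.mem_range, Finset.mem_image, Set.mem_ofPred_eq]
  refine ⟨?_, ?_⟩
  · rcases X.eq_empty_or_nonempty with rfl | hX
    · simp
    · obtain ⟨x, hx, hsup⟩ := X.exists_mem_eq_sup hX id
      exact Or.inr ⟨x, hx, by rw [hsup, id]⟩
  · rintro p (hp | ⟨x, hx, rfl⟩)
    · omega
    · exact Nat.add_le_add_right (Finset.le_sup (f := id) hx) t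

lemma eq_of_seedProfile_eq {X X' : Finset ℕ} {t t' : ℕ} (hX : ∀ x ∈ X, 2 ≤ x)
    (hX' : ∀ x ∈ X', 2 ≤ x) (h : seedProfile (X, t) = seedProfile (X', t')) :
    (X, t) = (X', t') := by
  have snd_le : ∀ {X X' : Finset ℕ} {t t' : ℕ}, (∀ x ∈ X, 2 ≤ x) →
      seedProfile (X, t) = seedProfile (X', t') → t' ≤ t := by
    intro X X' t t' hX h
    by_contra! hlt
    have hmem : 1 + t ∈ seedProfile (X', t') := by
      simp only [seedProfile, Finset.mem_union, Finset.mem_range]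
      omega
    have := hX 1 ((add_mem_seedProfile_iff one_pos).mp (h ▸ hmem))
    omega
  obtain rfl : t = t' := le_antisymm (snd_le hX' h.symm) (snd_le hX h)
  congr 1
  ext x
  by_cases hx : 2 ≤ x
  · rw [← add_mem_seedProfile_iff (t := t) (by omega), h, add_mem_seedProfile_iff (by omega)]
  · exact iff_of_false (fun h => hx (hX x h)) (fun h => hx (hX' x h))

section SeedAutomaton

variable {A : Type*} [DecidableEq A] {m r : ℕ} {one a : A} {π : ℕ → Finset A}

lemma seedRun_append (q : Finset ℕ × ℕ) (u v : List A) :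
    seedRun m one π q (u ++ v) = seedRun m one π (seedRun m one π q u) v := by
  induction u generalizing q with
  | nil => rfl
  | cons a u ih => exact ih _

lemma isSeedFinal_seedRun_singleton_iff (q : Finset ℕ × ℕ) :
    IsSeedFinal m (seedRun m one π q [one]) ↔ m ≤ q.1.sup id + q.2 + 1 := by
  simp only [seedRun, seedStep, IsSeedFinal]
  split_ifs with h
  · omega
  · simp only
    omega

lemma succ_mem_seedProfile_seedStep_iff {q : Finset ℕ × ℕ} (hq : ¬IsSeedFinal m q)
    (ha : a ≠ one) (n : ℕ) :
    n + 1 ∈ seedProfile (seedStep m one π q a) ↔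
      n ∈ seedProfile q ∧ n + 1 ≤ m ∧ a ∈ π (n + 1) := by
  obtain ⟨X, t⟩ := q
  have hπ : a ∈ π (n + 1) → π (n + 1) ≠ {one} := fun h he => ha (by simpa [he] using h)
  simp only [IsSeedFinal] at hq
  simp only [seedStep, seedProfile, Rpi, if_neg hq, if_neg ha, Finset.mem_union,
    Finset.mem_range, Finset.mem_filter, Finset.mem_Icc, Finset.mem_image, add_zero,
    exists_eq_right, Nat.add_right_cancel_iff, zero_add, Nat.lt_one_iff, Nat.add_one_ne_zero,
    false_or]
  constructor
  · rintro (⟨⟨⟨-, hm⟩, -⟩, ht, hπn⟩ | ⟨x, ⟨hx, hm, hπn⟩, rfl⟩)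
    · exact ⟨Or.inl (by omega), hm, hπn⟩
    · exact ⟨Or.inr ⟨x, hx, rfl⟩, hm, hπn⟩
  · rintro ⟨hn | ⟨x, hx, rfl⟩, hm, hπn⟩
    · exact Or.inl ⟨⟨⟨by omega, hm⟩, hπ hπn⟩, by omega, hπn⟩
    · exact Or.inr ⟨x, ⟨hx, hm, hπn⟩, rfl⟩

def IsInteriorLetter (π : ℕ → Finset A) (r : ℕ) (a : A) : Prop :=
  ∀ i ∈ Finset.Icc 1 (r + 2), a ∈ π i ↔ i ∈ Finset.Icc 2 (r + 1)

lemma IsInteriorLetter.succ_mem_seedProfile_seedStep_iff (hπa : IsInteriorLetter π r a)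
    (ha : a ≠ one) {q : Finset ℕ × ℕ} (hq : ¬IsSeedFinal (r + 2) q) (n : ℕ) :
    n + 1 ∈ seedProfile (seedStep (r + 2) one π q a) ↔ n ∈ seedProfile q ∧ 1 ≤ n ∧ n ≤ r := by
  rw [_root_.succ_mem_seedProfile_seedStep_iff hq ha]
  by_cases hn : n + 1 ≤ r + 2
  · rw [hπa (n + 1) (Finset.mem_Icc.mpr ⟨by omega, hn⟩), Finset.mem_Icc]
    exact and_congr_right fun _ => by omega
  · exact iff_of_false (by omega) (by omega)

lemma IsInteriorLetter.not_isSeedFinal_seedStep (hπa : IsInteriorLetter π r a)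
    (ha : a ≠ one) {q : Finset ℕ × ℕ} (hq : ¬IsSeedFinal (r + 2) q) :
    ¬IsSeedFinal (r + 2) (seedStep (r + 2) one π q a) := by
  set q' := seedStep (r + 2) one π q a
  intro hfinal
  unfold IsSeedFinal at hfinal
  obtain ⟨n, hn⟩ : ∃ n, q'.1.sup id + q'.2 = n + 1 := ⟨q'.1.sup id + q'.2 - 1, by omega⟩
  have hmem := (isGreatest_seedProfile q').1
  rw [hn, Finset.mem_coe, hπa.succ_mem_seedProfile_seedStep_iff ha hq] at hmem
  omega

lemma IsInteriorLetter.not_isSeedFinal_seedRun_replicate (hπa : IsInteriorLetter π r a)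
    (ha : a ≠ one) {q : Finset ℕ × ℕ} (hq : ¬IsSeedFinal (r + 2) q) (k : ℕ) :
    ¬IsSeedFinal (r + 2) (seedRun (r + 2) one π q (List.replicate k a)) := by
  induction k generalizing q with
  | zero => exact hq
  | succ k ih => exact ih (hπa.not_isSeedFinal_seedStep ha hq)

lemma IsInteriorLetter.add_mem_seedProfile_seedRun_replicate_iff (hπa : IsInteriorLetter π r a)
    (ha : a ≠ one) {q : Finset ℕ × ℕ} (hq : ¬IsSeedFinal (r + 2) q) {n k : ℕ} (hn : 1 ≤ n)
    (hnk : n + k ≤ r + 1) :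
    n + k ∈ seedProfile (seedRun (r + 2) one π q (List.replicate k a)) ↔ n ∈ seedProfile q := by
  induction k generalizing q n with
  | zero => rfl
  | succ k ih =>
    rw [← add_assoc, add_right_comm, List.replicate_succ, seedRun,
      ih (hπa.not_isSeedFinal_seedStep ha hq) (by omega) (by omega),
      hπa.succ_mem_seedProfile_seedStep_iff ha hq]
    exact and_iff_left ⟨hn, by omega⟩

lemma IsInteriorLetter.isSeedFinal_seedRun_replicate_append_singleton_iff
    (hπa : IsInteriorLetter π r a) (ha : a ≠ one) {q : Finset ℕ × ℕ}
    (hq : ¬IsSeedFinal (r + 2) q) {n k : ℕ} (hn : 1 ≤ n) (hnk : n + k = r + 1) :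
    IsSeedFinal (r + 2) (seedRun (r + 2) one π q (List.replicate k a ++ [one])) ↔
      n ∈ seedProfile q := by
  have hq' := hπa.not_isSeedFinal_seedRun_replicate ha hq k
  rw [seedRun_append, isSeedFinal_seedRun_singleton_iff,
    ← hπa.add_mem_seedProfile_seedRun_replicate_iff ha hq hn hnk.le, hnk]
  set q' := seedRun (r + 2) one π q (List.replicate k a)
  obtain ⟨hmem, hmax⟩ := isGreatest_seedProfile q'
  unfold IsSeedFinal at hq'
  constructor
  · intro h
    rwa [show r + 1 = q'.1.sup id + q'.2 by omega]
  · intro h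
    have := hmax h
    omega

end SeedAutomaton

lemma isInteriorLetter_zero_of_spacedSeed {r : ℕ} {π : ℕ → Finset (Fin 2)}
    (hπ1 : π 1 = {1}) (hπlast : π (r + 2) = {1})
    (hπmid : ∀ i : ℕ, 2 ≤ i → i ≤ r + 1 → π i = Finset.univ) :
    IsInteriorLetter π r 0 := by
  intro i hi
  rw [Finset.mem_Icc] at hi ⊢
  by_cases hmid : 2 ≤ i ∧ i ≤ r + 1
  · simp [hπmid i hmid.1 hmid.2, hmid]
  · obtain rfl | rfl : i = 1 ∨ i = r + 2 := by omega
    · simp [hπ1]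
    · simp [hπlast]

theorem spacedSeed_nonfinal_states_pairwise_inequivalent_general
    (r : ℕ) (π : ℕ → Finset (Fin 2))
    (hπ1 : π 1 = {1}) (hπlast : π (r + 2) = {1})
    (hπmid : ∀ i : ℕ, 2 ≤ i → i ≤ r + 1 → π i = Finset.univ)
    (X₁ X₂ : Finset ℕ) (t₁ t₂ : ℕ)
    (hX₁ : X₁ ⊆ Finset.Icc 2 (r + 1)) (hX₂ : X₂ ⊆ Finset.Icc 2 (r + 1))
    (hnf₁ : X₁.sup id + t₁ ≤ r + 1) (hnf₂ : X₂.sup id + t₂ ≤ r + 1)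
    (hne : (X₁, t₁) ≠ (X₂, t₂)) :
    ∃ u : List (Fin 2),
      Xor' (r + 2 ≤ (seedRun (r + 2) 1 π (X₁, t₁) u).1.sup id
              + (seedRun (r + 2) 1 π (X₁, t₁) u).2)
           (r + 2 ≤ (seedRun (r + 2) 1 π (X₂, t₂) u).1.sup id
              + (seedRun (r + 2) 1 π (X₂, t₂) u).2) := by
  have hπ0 := isInteriorLetter_zero_of_spacedSeed hπ1 hπlast hπmid
  obtain ⟨n, hn⟩ : ∃ n, Xor (n ∈ seedProfile (X₁, t₁)) (n ∈ seedProfile (X₂, t₂)) := by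
    by_contra! h
    refine hne (eq_of_seedProfile_eq (fun x hx => (Finset.mem_Icc.mp (hX₁ hx)).1)
      (fun x hx => (Finset.mem_Icc.mp (hX₂ hx)).1) (Finset.ext fun n => ?_))
    simpa [xor_iff_not_iff] using h n
  have hn_pos : 1 ≤ n := Nat.pos_of_ne_zero <| by
    rintro rfl
    simp [seedProfile] at hn
  have hn_le : n ≤ r + 1 := by
    rcases hn with ⟨h, -⟩ | ⟨h, -⟩
    · exact ((isGreatest_seedProfile _).2 h).trans hnf₁
    · exact ((isGreatest_seedProfile _).2 h).trans hnf₂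
  refine ⟨List.replicate (r + 1 - n) 0 ++ [1], ?_⟩
  have h₁ := hπ0.isSeedFinal_seedRun_replicate_append_singleton_iff zero_ne_one
    (q := (X₁, t₁)) (not_le.mpr (Nat.lt_succ_of_le hnf₁)) hn_pos (Nat.add_sub_cancel' hn_le)
  have h₂ := hπ0.isSeedFinal_seedRun_replicate_append_singleton_iff zero_ne_one
    (q := (X₂, t₂)) (not_le.mpr (Nat.lt_succ_of_le hnf₂)) hn_pos (Nat.add_sub_cancel' hn_le)
  unfold IsSeedFinal at h₁ h₂
  rw [h₁, h₂]
  exact hn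

/-- for the spaced seed `π = # _^r #` of span `m = r + 2` over `Fin 2`, no two
distinct non-final states of `S_π` are equivalent: there is a word `u` such that exactly one
of `ψ*(q₁,u)`, `ψ*(q₂,u)` is final (final meaning `max(X ∪ {0}) + t ≥ r + 2`). -/
theorem spacedSeed_nonfinal_states_pairwise_inequivalent
    (r : ℕ) (hr : 1 ≤ r) (π : ℕ → Finset (Fin 2))
    (hπ1 : π 1 = {1}) (hπlast : π (r + 2) = {1})
    (hπmid : ∀ i : ℕ, 2 ≤ i → i ≤ r + 1 → π i = Finset.univ)
    (X₁ X₂ : Finset ℕ) (t₁ t₂ : ℕ)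
    (hX₁ : X₁ ⊆ Finset.Icc 2 (r + 1)) (hX₂ : X₂ ⊆ Finset.Icc 2 (r + 1))
    (hnf₁ : X₁.sup id + t₁ ≤ r + 1) (hnf₂ : X₂.sup id + t₂ ≤ r + 1)
    (hne : (X₁, t₁) ≠ (X₂, t₂)) :
    ∃ u : List (Fin 2),
      Xor' (r + 2 ≤ (seedRun (r + 2) 1 π (X₁, t₁) u).1.sup id
              + (seedRun (r + 2) 1 π (X₁, t₁) u).2)
           (r + 2 ≤ (seedRun (r + 2) 1 π (X₂, t₂) u).1.sup id
              + (seedRun (r + 2) 1 π (X₂, t₂) u).2) :=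
  spacedSeed_nonfinal_states_pairwise_inequivalent_general r π hπ1 hπlast hπmid X₁ X₂ t₁ t₂ hX₁ hX₂
    hnf₁ hnf₂ hne
end

section
/- Let r ≥ 1 and let π be the spaced seed of span m = r + 2 over the binary alphabet {0,1} with π_1 = π_{r+2} = {1} and π_i = {0,1} for 2 ≤ i ≤ r + 1 (so R_π = {2, …, r+1}). Let q_1 = (X_1,t_1) and q_2 = (X_2,t_2) be non-final states (X_j ⊆ {2, …, r+1}, max(X_j ∪ {0}) + t_j ≤ r + 1) with max(X_1 ∪ {0}) + t_1 > max(X_2 ∪ {0}) + t_2, and set d = (r+2) − (max(X_1 ∪ {0}) + t_1). Then ψ*(q_1, 1^d) is a final state while ψ*(q_2, 1^d) is not, where 1^d is the word consisting of d copies of the letter 1. -/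
lemma seedRun_ones {A : Type*} [DecidableEq A] (m : ℕ) (one : A) (π : ℕ → Finset A)
    (X : Finset ℕ) : ∀ (d t : ℕ), X.sup id + t + d ≤ m →
    seedRun m one π (X, t) (List.replicate d one) = (X, t + d) := by
  intro d
  induction d with
  | zero => intro t _; simp [seedRun]
  | succ n ih =>
    intro t h
    rw [List.replicate_succ]
    simp only [seedRun]
    have hlt : ¬ (m ≤ X.sup id + t) := by omega
    rw [seedStep]
    simp only [hlt, if_false, if_pos rfl, if_true, eq_self_iff_true]
    rw [ih (t + 1) (by omega)]
    congr 1
    omega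

/-- for the spaced seed `π = # _^r #` of span `m = r + 2` over `Fin 2`, if
`q₁ = (X₁,t₁)` and `q₂ = (X₂,t₂)` are non-final states with
`max(X₁ ∪ {0}) + t₁ > max(X₂ ∪ {0}) + t₂`, and `d = (r+2) − (max(X₁ ∪ {0}) + t₁)`, then
`ψ*(q₁, 1^d)` is final while `ψ*(q₂, 1^d)` is not. -/
theorem spacedSeed_ones_word_separates_states
    (r : ℕ) (hr : 1 ≤ r) (π : ℕ → Finset (Fin 2))
    (hπ1 : π 1 = {1}) (hπlast : π (r + 2) = {1})
    (hπmid : ∀ i : ℕ, 2 ≤ i → i ≤ r + 1 → π i = Finset.univ)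
    (X₁ X₂ : Finset ℕ) (t₁ t₂ : ℕ)
    (hX₁ : X₁ ⊆ Finset.Icc 2 (r + 1)) (hX₂ : X₂ ⊆ Finset.Icc 2 (r + 1))
    (hnf₁ : X₁.sup id + t₁ ≤ r + 1) (hnf₂ : X₂.sup id + t₂ ≤ r + 1)
    (hgt : X₂.sup id + t₂ < X₁.sup id + t₁) :
    (r + 2 ≤
        (seedRun (r + 2) 1 π (X₁, t₁) (List.replicate ((r + 2) - (X₁.sup id + t₁)) 1)).1.sup id
          + (seedRun (r + 2) 1 π (X₁, t₁)
              (List.replicate ((r + 2) - (X₁.sup id + t₁)) 1)).2) ∧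
    ¬ (r + 2 ≤
        (seedRun (r + 2) 1 π (X₂, t₂) (List.replicate ((r + 2) - (X₁.sup id + t₁)) 1)).1.sup id
          + (seedRun (r + 2) 1 π (X₂, t₂)
              (List.replicate ((r + 2) - (X₁.sup id + t₁)) 1)).2) := by
  set d := (r + 2) - (X₁.sup id + t₁) with hd
  have h1 : seedRun (r + 2) 1 π (X₁, t₁) (List.replicate d 1) = (X₁, t₁ + d) :=
    seedRun_ones _ _ _ _ _ _ (by omega)
  have h2 : seedRun (r + 2) 1 π (X₂, t₂) (List.replicate d 1) = (X₂, t₂ + d) :=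
    seedRun_ones _ _ _ _ _ _ (by omega)
  rw [h1, h2]
  constructor
  · simp only; omega
  · simp only; omega
end
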